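/- arXiv:1506.04438 — 2 statements merged into one kernel-verified Lean document; each statement's English description precedes it below -/
import Mathlib

section
/- Let T and T' be pseudo MUL-trees on X, N a phylogenetic network on X, g : T' → N an X-morphism, and f : T → N a folding map. Then there exists an X-morphism g̃ : T' → T with f ∘ g̃ = g. Moreover, if g is a rooted X-morphism (maps root to root), then g̃ is rooted and is the unique such map. -/
/-! Basic framework: labelled rooted directed multigraphs, phylogenetic
networks, (pseudo) MUL-trees, unfolding, folding maps, etc. -/

structure Dgr (X : Type) : Type 1 where
  V : Type
  A : Type
  tl : A → V
  hd : A → V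
  root : V
  lab : V → Option X

namespace Dgr

variable {X : Type}

/-- There is an arc from `u` to `v`. -/
def arcRel (G : Dgr X) (u v : G.V) : Prop := ∃ a : G.A, G.tl a = u ∧ G.hd a = v

/-- `v` is reachable from `u` by a directed path (possibly trivial);
equivalently, `v` is below `u` or equal to it. -/
def Reaches (G : Dgr X) : G.V → G.V → Prop := Relation.ReflTransGen G.arcRel

noncomputable def indeg (G : Dgr X) (v : G.V) : ℕ := Nat.card {a : G.A // G.hd a = v}
noncomputable def outdeg (G : Dgr X) (v : G.V) : ℕ := Nat.card {a : G.A // G.tl a = v}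

def IsLeaf (G : Dgr X) (v : G.V) : Prop := G.outdeg v = 0

def Acyclic (G : Dgr X) : Prop := ∀ v, ¬ Relation.TransGen G.arcRel v v

/-- A finite rooted DAG: acyclic, the root has in-degree zero and every
vertex is reachable from the root. -/
def IsRootedDAG (G : Dgr X) : Prop :=
  Finite G.V ∧ Finite G.A ∧ G.Acyclic ∧ G.indeg G.root = 0 ∧ ∀ v, G.Reaches G.root v

/-- A tree vertex: in-degree one, out-degree zero (a leaf) or at least two. -/
def IsTreeVertex (G : Dgr X) (v : G.V) : Prop :=
  G.indeg v = 1 ∧ (G.outdeg v = 0 ∨ 2 ≤ G.outdeg v)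

/-- A reticulation vertex: out-degree one and in-degree at least two. -/
def IsRetVertex (G : Dgr X) (v : G.V) : Prop := G.outdeg v = 1 ∧ 2 ≤ G.indeg v

/-- An `X`-network: rooted DAG (multi-arcs allowed), root of out-degree ≥ 2,
every non-root vertex a tree vertex or a reticulation vertex, and the leaves
are labelled bijectively by `X`. -/
def IsXNetwork (G : Dgr X) : Prop :=
  G.IsRootedDAG ∧ 2 ≤ G.outdeg G.root ∧
  (∀ v, v ≠ G.root → G.IsTreeVertex v ∨ G.IsRetVertex v) ∧
  (∀ v, (∃ x, G.lab v = some x) ↔ G.IsLeaf v) ∧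
  (∀ x : X, ∃! v, G.lab v = some x)

def NoMultiArcs (G : Dgr X) : Prop :=
  ∀ a b : G.A, G.tl a = G.tl b → G.hd a = G.hd b → a = b

/-- A phylogenetic network on `X`: an `X`-network without multi-arcs. -/
def IsPhyloNetwork (G : Dgr X) : Prop := G.IsXNetwork ∧ G.NoMultiArcs

/-- A phylogenetic tree on `X`: a phylogenetic network with no reticulations. -/
def IsPhyloTree (G : Dgr X) : Prop := G.IsPhyloNetwork ∧ ∀ v, ¬ G.IsRetVertex v

/-- A pseudo MUL-tree on `X`: a finite rooted tree whose leaves are labelled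
by elements of `X` (several leaves may share a label, every element of `X`
is used, and exactly the leaves are labelled). -/
def IsPMulTree (G : Dgr X) : Prop :=
  G.IsRootedDAG ∧ (∀ v, v ≠ G.root → G.indeg v = 1) ∧
  (∀ v, (∃ x, G.lab v = some x) ↔ G.IsLeaf v) ∧
  (∀ x : X, ∃ v, G.lab v = some x)

/-- A MUL-tree: a pseudo MUL-tree with no in-degree-one out-degree-one vertex. -/
def IsMulTree (G : Dgr X) : Prop :=
  G.IsPMulTree ∧ ∀ v, ¬ (G.indeg v = 1 ∧ G.outdeg v = 1)

/-- Isomorphism of labelled rooted directed multigraphs. -/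
def Iso (G H : Dgr X) : Prop :=
  ∃ (φ : G.V ≃ H.V) (ψ : G.A ≃ H.A),
    (∀ a, H.tl (ψ a) = φ (G.tl a)) ∧ (∀ a, H.hd (ψ a) = φ (G.hd a)) ∧
    φ G.root = H.root ∧ (∀ v, H.lab (φ v) = G.lab v)

/-- The pendant subgraph rooted at `v` (everything below or equal to `v`). -/
def pendant (G : Dgr X) (v : G.V) : Dgr X where
  V := {w : G.V // G.Reaches v w}
  A := {a : G.A // G.Reaches v (G.tl a)}
  tl a := ⟨G.tl a.1, a.2⟩
  hd a := ⟨G.hd a.1, a.2.tail ⟨a.1, rfl, rfl⟩⟩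
  root := ⟨v, Relation.ReflTransGen.refl⟩
  lab w := G.lab w.1

/-- Directed paths in `G` starting at the root, ending at the index vertex. -/
inductive RPath (G : Dgr X) : G.V → Type
  | nil : RPath G G.root
  | cons {v : G.V} (p : RPath G v) (a : G.A) (h : G.tl a = v) : RPath G (G.hd a)

/-- The path-tree `U*(G)`: vertices are directed root-paths of `G`, arcs are
one-arc extensions, the label of a path is the label of its last vertex. -/
def Ustar (G : Dgr X) : Dgr X where
  V := Σ v : G.V, RPath G v
  A := Σ v : G.V, RPath G v × {a : G.A // G.tl a = v}
  tl x := ⟨x.1, x.2.1⟩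
  hd x := ⟨G.hd x.2.2.1, RPath.cons x.2.1 x.2.2.1 x.2.2.2⟩
  root := ⟨G.root, RPath.nil⟩
  lab x := G.lab x.1

/-- Vertices kept by the suppression operation (the root is always kept). -/
def Keep (G : Dgr X) (v : G.V) : Prop :=
  v = G.root ∨ ¬ (G.indeg v = 1 ∧ G.outdeg v = 1)

def startV (G : Dgr X) (l : List G.A) : G.V :=
  match l.head? with
  | some a => G.tl a
  | none => G.root

def endV (G : Dgr X) (l : List G.A) : G.V :=
  match l.getLast? with
  | some a => G.hd a
  | none => G.root

/-- `l` is a composable sequence of arcs. -/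
def IsChain (G : Dgr X) (l : List G.A) : Prop :=
  ∀ p a b s, l = p ++ a :: b :: s → G.hd a = G.tl b

/-- An arc of the suppression: a nonempty directed path between kept vertices
all of whose intermediate vertices are suppressed. -/
def IsSuppArc (G : Dgr X) (l : List G.A) : Prop :=
  l ≠ [] ∧ G.IsChain l ∧ G.Keep (G.startV l) ∧ G.Keep (G.endV l) ∧
  ∀ p a s, l = p ++ a :: s → s ≠ [] → ¬ G.Keep (G.hd a)

/-- Suppression of all in-degree-one out-degree-one vertices. -/
def suppress (G : Dgr X) : Dgr X where
  V := {v : G.V // G.Keep v}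
  A := {l : List G.A // G.IsSuppArc l}
  tl l := ⟨G.startV l.1, l.2.2.2.1⟩
  hd l := ⟨G.endV l.1, l.2.2.2.2.1⟩
  root := ⟨G.root, Or.inl rfl⟩
  lab v := G.lab v.1

/-- The unfolding `U(G)`: the path-tree with in-degree-one out-degree-one
vertices suppressed. -/
def U (G : Dgr X) : Dgr X := G.Ustar.suppress

/-- An `X`-morphism: maps on vertices and arcs commuting with heads and tails
and preserving the leaf-labelling by `X`. -/
structure Mor (G H : Dgr X) where
  fV : G.V → H.V
  fA : G.A → H.A
  tl_comm : ∀ a, H.tl (fA a) = fV (G.tl a)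
  hd_comm : ∀ a, H.hd (fA a) = fV (G.hd a)
  lab_pres : ∀ v x, G.lab v = some x → H.lab (fV v) = some x

def Mor.IsRooted {G H : Dgr X} (f : Mor G H) : Prop := f.fV G.root = H.root

/-- A folding map: a surjective `X`-morphism with the unique arc-lifting
property. -/
def Mor.IsFolding {G H : Dgr X} (f : Mor G H) : Prop :=
  Function.Surjective f.fV ∧ Function.Surjective f.fA ∧
  ∀ (a : H.A) (v : G.V), f.fV v = H.tl a →
    ∃! b : G.A, G.tl b = v ∧ f.fA b = a

/-- The canonical map `U*(G) → G` sending a root-path to its last vertex. -/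
def fstar (G : Dgr X) : Mor G.Ustar G where
  fV x := x.1
  fA x := x.2.2.1
  tl_comm a := a.2.2.2
  hd_comm _ := rfl
  lab_pres _ _ h := h

/-- `v` is an interior vertex of the arc-sequence `l`. -/
def IsInteriorOf (G : Dgr X) (l : List G.A) (v : G.V) : Prop :=
  ∃ p a s, l = p ++ a :: s ∧ s ≠ [] ∧ G.hd a = v

/-- `G'` is a subdivision of `G`. -/
def IsSubdivisionOf (G' G : Dgr X) : Prop :=
  ∃ (φ : G.V → G'.V) (ψ : G.A → List G'.A),
    Function.Injective φ ∧ φ G.root = G'.root ∧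
    (∀ v, G'.lab (φ v) = G.lab v) ∧
    (∀ a, ψ a ≠ [] ∧ G'.IsChain (ψ a) ∧ G'.startV (ψ a) = φ (G.tl a) ∧
      G'.endV (ψ a) = φ (G.hd a) ∧
      ∀ v, G'.IsInteriorOf (ψ a) v → v ∉ Set.range φ) ∧
    (∀ v' : G'.V, v' ∉ Set.range φ →
      G'.indeg v' = 1 ∧ G'.outdeg v' = 1 ∧ G'.lab v' = none) ∧
    (∀ a' : G'.A, ∃! a : G.A, a' ∈ ψ a)

/-- `H` is (isomorphic to) a subgraph of `G`. -/
def IsSubgraphOf (H G : Dgr X) : Prop :=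
  ∃ (φ : H.V → G.V) (ψ : H.A → G.A),
    Function.Injective φ ∧ Function.Injective ψ ∧
    (∀ a, G.tl (ψ a) = φ (H.tl a)) ∧ (∀ a, G.hd (ψ a) = φ (H.hd a)) ∧
    (∀ v, H.lab v = G.lab (φ v))

/-- `G` displays `T`: some subgraph of `G` is a subdivision of `T`. -/
def Displays (G T : Dgr X) : Prop :=
  ∃ H : Dgr X, IsSubgraphOf H G ∧ IsSubdivisionOf H T

/-- `T` is weakly displayed by `G`: `T` is displayed by the unfolding `U(G)`. -/
def WeaklyDisplays (G T : Dgr X) : Prop := Displays G.U T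

/-- `N` is (isomorphic to) the folding `F(T)` of the MUL-tree `T`: `N` is an
`X`-network obtained as the quotient of a subdivision `T'` of `T` by the
relation identifying vertices with isomorphic pendant subtrees, the quotient
map being a folding map whose fibres are exactly the classes of that relation. -/
def IsFoldingOf (N T : Dgr X) : Prop :=
  N.IsXNetwork ∧ ∃ T' : Dgr X, IsSubdivisionOf T' T ∧
    ∃ f : Mor T' N, f.IsFolding ∧
      ∀ u v : T'.V, f.fV u = f.fV v ↔ Iso (T'.pendant u) (T'.pendant v)

/-- `N` is stable: `F(U(N))` is isomorphic to `N`. -/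
def Stable (N : Dgr X) : Prop :=
  ∃ N' : Dgr X, IsFoldingOf N' N.U ∧ Iso N' N

/-- `T'` is the guide tree `T†` of the folding operation applied to `T`:
a subdivision of `T` whose quotient by the isomorphic-pendant-subtree
relation is an `X`-network via a folding map. -/
def IsDaggerOf (T' T : Dgr X) : Prop :=
  IsSubdivisionOf T' T ∧ ∃ (N : Dgr X) (f : Mor T' N), N.IsXNetwork ∧
    f.IsFolding ∧
    ∀ u v : T'.V, f.fV u = f.fV v ↔ Iso (T'.pendant u) (T'.pendant v)

/-- The child of every reticulation vertex is a tree vertex. -/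
def Compressed (N : Dgr X) : Prop :=
  ∀ a : N.A, N.IsRetVertex (N.tl a) → N.IsTreeVertex (N.hd a)

/-- Every (non-leaf) tree vertex has out-degree two. -/
def SemiResolved (N : Dgr X) : Prop :=
  ∀ v, N.indeg v = 1 → N.outdeg v = 0 ∨ N.outdeg v = 2

/-- Binary phylogenetic network. -/
def BinaryNet (N : Dgr X) : Prop :=
  N.outdeg N.root = 2 ∧ ∀ v, v ≠ N.root →
    (N.IsRetVertex v → N.indeg v = 2) ∧
    (N.indeg v = 1 → N.outdeg v = 0 ∨ N.outdeg v = 2)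

/-- Binary tree: every vertex has out-degree zero or two. -/
def BinaryTree (T : Dgr X) : Prop := ∀ v, T.outdeg v = 0 ∨ T.outdeg v = 2

/-- The set of children of a vertex. -/
def children (N : Dgr X) (v : N.V) : Set N.V := {w | ∃ a, N.tl a = v ∧ N.hd a = w}

/-- Tree-sibling network: every reticulation vertex has a sibling that is a
tree vertex. -/
def TreeSibling (N : Dgr X) : Prop :=
  ∀ v, N.IsRetVertex v → ∃ w, w ≠ v ∧ N.IsTreeVertex w ∧
    ∃ a b : N.A, N.tl a = N.tl b ∧ N.hd a = v ∧ N.hd b = w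

/-- The final vertex in `N` of (the path underlying) a vertex of `U(N)`. -/
def endOf (N : Dgr X) (p : N.U.V) : N.V := p.1.1

/-- Identifiable pair of tree vertices. -/
def Identifiable (N : Dgr X) (v w : N.V) : Prop :=
  v ≠ w ∧ N.IsTreeVertex v ∧ N.IsTreeVertex w ∧
  ∃ p q : N.U.V, N.endOf p = v ∧ N.endOf q = w ∧
    Iso (N.U.pendant p) (N.U.pendant q)

/-- Irreducible network: no identifiable pair of tree vertices. -/
def Irreducible (N : Dgr X) : Prop := ¬ ∃ v w, N.Identifiable v w

/-- The pendant subtree at `v` is inextendible: some other vertex carries an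
isomorphic pendant subtree. -/
def Inextendible (T : Dgr X) (v : T.V) : Prop :=
  ∃ v', v' ≠ v ∧ Iso (T.pendant v) (T.pendant v')

/-- A reconciliation map between a tree `T` and a network `N`. -/
structure Recon (T N : Dgr X) where
  r : T.V → N.V
  P : T.A → List N.A
  tree_or_root : ∀ v, r v = N.root ∨ N.IsTreeVertex (r v)
  leaf_fix : ∀ v x, T.lab v = some x → N.lab (r v) = some x
  chain : ∀ a, N.IsChain (P a)
  trivialP : ∀ a, P a = [] → r (T.tl a) = r (T.hd a)
  startP : ∀ a, P a ≠ [] → N.startV (P a) = r (T.tl a)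
  endP : ∀ a, P a ≠ [] → N.endV (P a) = r (T.hd a)

/-- Locally separated reconciliation: for any two distinct arcs of `T` with
the same tail, both associated paths are nonempty and have distinct initial
arcs. -/
def Recon.LocSep {T N : Dgr X} (ρ : Recon T N) : Prop :=
  ∀ a b : T.A, a ≠ b → T.tl a = T.tl b →
    ρ.P a ≠ [] ∧ ρ.P b ≠ [] ∧ (ρ.P a).head? ≠ (ρ.P b).head?

/-- The pendant subnetwork `N(u)`: restrict below `u` and suppress. -/
def Nsub (N : Dgr X) (u : N.V) : Dgr X := (N.pendant u).suppress

/-- The function `τ` of the dynamic program (as a proposition, `τ(v,u)=1`). -/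
def tau (T N : Dgr X) (v : T.V) (u : N.V) : Prop :=
  (T.IsLeaf v → ∀ x, T.lab v = some x →
     ∃ u' : N.V, N.lab u' = some x ∧ N.Reaches u u') ∧
  (¬ T.IsLeaf v → ∃ u' : N.V, (u' = N.root ∨ N.IsTreeVertex u') ∧
     N.Reaches u u' ∧ ∃ ρ : Recon (T.pendant v) (N.Nsub u'), ρ.LocSep)

/-- The result of `HangLeaves(v)` on the network `N` (new leaves are labelled
by the two new elements of `X ⊕ Fin 2`); vertices `inr 0, 1, 2, 3, 4` are
`x_v, x'_v, p_v, q_v, ρ_v` respectively. -/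
def HangN (N : Dgr X) (v : N.V) : Dgr (X ⊕ Fin 2) where
  V := N.V ⊕ Fin 5
  A := N.A ⊕ Fin 6
  tl := Sum.elim (fun a => Sum.inl (N.tl a))
    ![Sum.inr 4, Sum.inr 4, Sum.inr 2, Sum.inl v, Sum.inr 2, Sum.inr 3]
  hd := Sum.elim (fun a => Sum.inl (N.hd a))
    ![Sum.inl N.root, Sum.inr 2, Sum.inr 3, Sum.inr 3, Sum.inr 1, Sum.inr 0]
  root := Sum.inr 4
  lab := Sum.elim (fun w => (N.lab w).map Sum.inl)
    ![some (Sum.inr 0), some (Sum.inr 1), none, none, none]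

/-- The result of `HangLeaves` on the tree `T`; vertices `inr 0, 1, 2, 3` are
`x_v, x'_v, p_v, ρ_v` respectively. -/
def HangT (T : Dgr X) : Dgr (X ⊕ Fin 2) where
  V := T.V ⊕ Fin 4
  A := T.A ⊕ Fin 4
  tl := Sum.elim (fun a => Sum.inl (T.tl a))
    ![Sum.inr 3, Sum.inr 3, Sum.inr 2, Sum.inr 2]
  hd := Sum.elim (fun a => Sum.inl (T.hd a))
    ![Sum.inl T.root, Sum.inr 2, Sum.inr 0, Sum.inr 1]
  root := Sum.inr 3
  lab := Sum.elim (fun w => (T.lab w).map Sum.inl)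
    ![some (Sum.inr 0), some (Sum.inr 1), none, none]

end Dgr

/-! Since every vertex of `T'` is reached from the root and has a unique parent arc, the unique
arc-lifting property of `f` lifts `g` arc by arc from any preimage `t₀` of the image of the root:
the lifted vertices form a relation that is functional because parent arcs are unique, and the
lifted arcs are the unique lifts above it. Labels survive because `f` reflects leaves. The same
arc-by-arc argument shows that two lifts agreeing at the root agree everywhere, and if `g` is rooted
then `t₀` must be the root of `T`, the only vertex of a pseudo MUL-tree that can map to the
in-degree-zero root of `N`. -/

namespace Dgr

variable {X : Type} {G H T T' N : Dgr X}

theorem IsRootedDAG.hd_ne_root (hG : G.IsRootedDAG) (a : G.A) : G.hd a ≠ G.root := by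
  have : Finite G.A := hG.2.1
  intro ha
  exact Nat.card_ne_zero.mpr ⟨⟨⟨a, ha⟩⟩, inferInstance⟩ hG.2.2.2.1

theorem IsPMulTree.existsUnique_hd_eq (hT : T.IsPMulTree) {v : T.V} (hv : v ≠ T.root) :
    ∃! a : T.A, T.hd a = v := by
  obtain ⟨hsub, ⟨a, ha⟩⟩ := Nat.card_eq_one_iff_unique.mp (hT.2.1 v hv)
  exact ⟨a, ha, fun b hb => congrArg Subtype.val (hsub.elim ⟨b, hb⟩ ⟨a, ha⟩)⟩

theorem Mor.ext {f₁ f₂ : Mor G H} (hV : f₁.fV = f₂.fV) (hA : f₁.fA = f₂.fA) : f₁ = f₂ := by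
  cases f₁
  cases f₂
  cases hV
  cases hA
  rfl

theorem Mor.isLeaf_of_isLeaf_fV [Finite H.A] (f : Mor G H) {v : G.V}
    (hv : H.IsLeaf (f.fV v)) : G.IsLeaf v := by
  by_contra hleaf
  obtain ⟨⟨a, ha⟩⟩ := (Nat.card_ne_zero.mp hleaf).1
  exact Nat.card_ne_zero.mpr ⟨⟨⟨f.fA a, by rw [f.tl_comm, ha]⟩⟩, inferInstance⟩ hv

theorem Mor.lab_eq_of_lab_fV_eq (hG : G.IsPMulTree) (hH : H.IsXNetwork) (f : Mor G H)
    {v : G.V} {x : X} (hx : H.lab (f.fV v) = some x) : G.lab v = some x := by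
  have : Finite H.A := hH.1.2.1
  have hleaf : G.IsLeaf v := f.isLeaf_of_isLeaf_fV ((hH.2.2.2.1 _).mp ⟨x, hx⟩)
  obtain ⟨y, hy⟩ := (hG.2.2.1 v).mpr hleaf
  rw [hy, ← Option.some_inj, ← hx, f.lab_pres v y hy]

theorem Mor.eq_root_of_fV_eq_root (hG : G.IsPMulTree) (hH : H.IsRootedDAG) (f : Mor G H)
    {v : G.V} (hv : f.fV v = H.root) : v = G.root := by
  by_contra hroot
  obtain ⟨a, ha, -⟩ := hG.existsUnique_hd_eq hroot
  exact hH.hd_ne_root (f.fA a) (by rw [f.hd_comm, ha, hv])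

def Mor.HasUniqueArcLifting (f : Mor G H) : Prop :=
  ∀ (a : H.A) (v : G.V), f.fV v = H.tl a → ∃! b : G.A, G.tl b = v ∧ f.fA b = a

theorem Mor.IsFolding.hasUniqueArcLifting {f : Mor G H} (hf : f.IsFolding) :
    f.HasUniqueArcLifting :=
  hf.2.2

theorem Mor.HasUniqueArcLifting.arc_eq {f : Mor G H} (hf : f.HasUniqueArcLifting)
    {b₁ b₂ : G.A} (htl : G.tl b₁ = G.tl b₂) (hfA : f.fA b₁ = f.fA b₂) : b₁ = b₂ :=
  (hf (f.fA b₁) (G.tl b₁) (f.tl_comm b₁).symm).unique ⟨rfl, rfl⟩ ⟨htl.symm, hfA.symm⟩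

theorem Mor.ext_of_comp_eq {f : Mor T N} (hf : f.HasUniqueArcLifting)
    (hT' : ∀ v, T'.Reaches T'.root v) {h₁ h₂ : Mor T' T}
    (hroot : h₁.fV T'.root = h₂.fV T'.root) (hA : ∀ a, f.fA (h₁.fA a) = f.fA (h₂.fA a)) :
    h₁ = h₂ := by
  have harc : ∀ a, h₁.fV (T'.tl a) = h₂.fV (T'.tl a) → h₁.fA a = h₂.fA a := fun a htl =>
    hf.arc_eq (by rw [h₁.tl_comm, h₂.tl_comm, htl]) (hA a)
  have hV : ∀ v, h₁.fV v = h₂.fV v := fun v => by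
    induction hT' v with
    | refl => exact hroot
    | tail _ hstep ih =>
      obtain ⟨a, rfl, rfl⟩ := hstep
      rw [← h₁.hd_comm, ← h₂.hd_comm, harc a ih]
  exact Mor.ext (funext hV) (funext fun a => harc a (hV _))

section Lift

variable (f : Mor T N) (g : Mor T' N) (t₀ : T.V)

inductive Lifts : T'.V → T.V → Prop
  | root : Lifts T'.root t₀
  | step {a : T'.A} {b : T.A} : Lifts (T'.tl a) (T.tl b) → f.fA b = g.fA a →
      Lifts (T'.hd a) (T.hd b)

variable {f g t₀}

theorem Lifts.fV_eq (ht₀ : f.fV t₀ = g.fV T'.root) {v : T'.V} {t : T.V}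
    (h : Lifts f g t₀ v t) : f.fV t = g.fV v := by
  induction h with
  | root => exact ht₀
  | @step a b _ hb _ => rw [← f.hd_comm, hb, g.hd_comm]

theorem exists_lifts (hT' : ∀ v, T'.Reaches T'.root v) (hf : f.HasUniqueArcLifting)
    (ht₀ : f.fV t₀ = g.fV T'.root) (v : T'.V) : ∃ t, Lifts f g t₀ v t := by
  induction hT' v with
  | refl => exact ⟨t₀, .root⟩
  | tail _ hstep ih =>
    obtain ⟨a, rfl, rfl⟩ := hstep
    obtain ⟨t, ht⟩ := ih
    obtain ⟨b, ⟨hbt, hba⟩, -⟩ := hf (g.fA a) t (by rw [ht.fV_eq ht₀, g.tl_comm])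
    exact ⟨T.hd b, .step (hbt ▸ ht) hba⟩

theorem Lifts.unique (hT' : T'.IsPMulTree) (hf : f.HasUniqueArcLifting) {v : T'.V}
    {t₁ t₂ : T.V} (h₁ : Lifts f g t₀ v t₁) (h₂ : Lifts f g t₀ v t₂) : t₁ = t₂ := by
  induction h₁ generalizing t₂ with
  | root =>
    generalize hv : T'.root = v at h₂
    cases h₂ with
    | root => rfl
    | step => exact absurd hv.symm (hT'.1.hd_ne_root _)
  | @step a b _ hb ih =>
    generalize hv : T'.hd a = v at h₂
    cases h₂ with
    | root => exact absurd hv (hT'.1.hd_ne_root a)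
    | @step a' b' h' hb' =>
      obtain rfl : a = a' := (hT'.existsUnique_hd_eq (hT'.1.hd_ne_root a)).unique rfl hv.symm
      exact congrArg T.hd (hf.arc_eq (ih h') (hb.trans hb'.symm))

theorem exists_lift (hT : T.IsPMulTree) (hN : N.IsXNetwork) (hT' : T'.IsPMulTree)
    (hf : f.HasUniqueArcLifting) (ht₀ : f.fV t₀ = g.fV T'.root) :
    ∃ h : Mor T' T, h.fV T'.root = t₀ ∧
      (∀ v, f.fV (h.fV v) = g.fV v) ∧ ∀ a, f.fA (h.fA a) = g.fA a := by
  choose hV hlifts using exists_lifts hT'.1.2.2.2.2 hf ht₀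
  have hcomm (v : T'.V) : f.fV (hV v) = g.fV v := (hlifts v).fV_eq ht₀
  choose hA hA_tl hA_comm using fun a =>
    (hf (g.fA a) (hV (T'.tl a)) (by rw [hcomm, g.tl_comm])).exists
  have hA_hd (a : T'.A) : T.hd (hA a) = hV (T'.hd a) :=
    (Lifts.step (hA_tl a ▸ hlifts _) (hA_comm a)).unique hT' hf (hlifts _)
  have hlab (v : T'.V) (x : X) (hx : T'.lab v = some x) : T.lab (hV v) = some x :=
    f.lab_eq_of_lab_fV_eq hT hN (by rw [hcomm]; exact g.lab_pres v x hx)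
  exact ⟨⟨hV, hA, hA_tl, hA_hd, hlab⟩, (hlifts _).unique hT' hf .root, hcomm, hA_comm⟩

end Lift

end Dgr

/-- Lifting through a folding map: given an `X`-morphism
`g : T' → N` and a folding map `f : T → N`, there is an `X`-morphism
`g̃ : T' → T` with `f ∘ g̃ = g`; moreover if `g` is rooted then `g̃` is the
unique rooted such morphism. -/
theorem lifting (X : Type) (T T' N : Dgr X) (hT : T.IsPMulTree)
    (hT' : T'.IsPMulTree) (hN : N.IsPhyloNetwork)
    (g : Dgr.Mor T' N) (f : Dgr.Mor T N) (hf : f.IsFolding) :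
    (∃ gt : Dgr.Mor T' T,
        (∀ v, f.fV (gt.fV v) = g.fV v) ∧ (∀ a, f.fA (gt.fA a) = g.fA a)) ∧
    (g.IsRooted →
      ∃! gt : Dgr.Mor T' T, gt.IsRooted ∧
        (∀ v, f.fV (gt.fV v) = g.fV v) ∧ (∀ a, f.fA (gt.fA a) = g.fA a)) := by
  obtain ⟨t₀, ht₀⟩ := hf.1 (g.fV T'.root)
  obtain ⟨gt, hroot, hV, hA⟩ := Dgr.exists_lift hT hN.1 hT' hf.hasUniqueArcLifting ht₀
  refine ⟨⟨gt, hV, hA⟩, fun hg => ?_⟩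
  have hrooted : gt.IsRooted := hroot.trans (f.eq_root_of_fV_eq_root hT hN.1.1 (ht₀.trans hg))
  refine ⟨gt, ⟨hrooted, hV, hA⟩, fun gt' ⟨hroot', _, hA'⟩ => ?_⟩
  exact Dgr.Mor.ext_of_comp_eq hf.hasUniqueArcLifting hT'.1.2.2.2.2
    (hroot'.trans hrooted.symm) fun a => (hA' a).trans (hA a).symm
end

section
/- If T' is a pseudo MUL-tree on X, N is a phylogenetic network on X, and g : T' → N is a folding map, then T' is isomorphic to the path-tree U*(N). In other words, U*(N) is the unique (up to isomorphism) pseudo MUL-tree admitting a folding map onto N. -/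
/-! Lifting root-paths of `N` along the folding map, starting at the root of `T'`, gives
maps `U*(N) → T'` on vertices and arcs; unique arc-lifting makes each lift well defined.
In the tree `T'` every vertex has at most one incoming arc, so a lifted path can be
recovered backwards from its endpoint (injectivity), and every vertex is reachable from
the root, so it is the endpoint of a lifted path (surjectivity). Labels are reflected
because on both sides the labelled vertices are exactly the leaves, and arcs leaving a
vertex of `T'` map to arcs leaving its image. -/

namespace Dgr

variable {X : Type} {G H : Dgr X}

lemma hd_ne_of_indeg_eq_zero [Finite G.A] {v : G.V} (hv : G.indeg v = 0) (a : G.A) :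
    G.hd a ≠ v := fun h =>
  have : Nonempty {b : G.A // G.hd b = v} := ⟨⟨a, h⟩⟩
  Nat.card_pos.ne' hv

lemma tl_ne_of_isLeaf [Finite G.A] {v : G.V} (hv : G.IsLeaf v) (a : G.A) :
    G.tl a ≠ v := fun h =>
  have : Nonempty {b : G.A // G.tl b = v} := ⟨⟨a, h⟩⟩
  Nat.card_pos.ne' hv

lemma eq_of_indeg_eq_one {v : G.V} (hv : G.indeg v = 1) {a b : G.A} (ha : G.hd a = v)
    (hb : G.hd b = v) : a = b :=
  congrArg Subtype.val ((Nat.card_eq_one_iff_unique.mp hv).1.elim ⟨a, ha⟩ ⟨b, hb⟩)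

lemma exists_tl_eq_of_not_isLeaf {v : G.V} (hv : ¬ G.IsLeaf v) : ∃ a, G.tl a = v := by
  by_contra! h
  have : IsEmpty {a : G.A // G.tl a = v} := ⟨fun a => h a.1 a.2⟩
  exact hv Nat.card_of_isEmpty

lemma eq_root_of_reaches_root [Finite G.A] (h0 : G.indeg G.root = 0) {u : G.V}
    (h : G.Reaches u G.root) : u = G.root := by
  rcases Relation.ReflTransGen.cases_tail h with h | ⟨_, _, a, -, ha⟩
  · exact h.symm
  · exact absurd ha (hd_ne_of_indeg_eq_zero h0 a)

lemma Ustar.arc_ext {x y : G.Ustar.A} (htl : G.Ustar.tl x = G.Ustar.tl y)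
    (ha : x.2.2.1 = y.2.2.1) : x = y := by
  obtain ⟨v, p, a, hav⟩ := x
  obtain ⟨v', p', a', hav'⟩ := y
  obtain ⟨rfl, hp⟩ := Sigma.mk.inj_iff.mp htl
  cases hp
  cases ha
  rfl

lemma Iso.symm (h : Iso G H) : Iso H G := by
  obtain ⟨φ, ψ, htl, hhd, hroot, hlab⟩ := h
  refine ⟨φ.symm, ψ.symm, fun a => ?_, fun a => ?_, ?_, fun v => ?_⟩
  · rw [Equiv.eq_symm_apply, ← htl, Equiv.apply_symm_apply]
  · rw [Equiv.eq_symm_apply, ← hhd, Equiv.apply_symm_apply]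
  · rw [Equiv.symm_apply_eq, hroot]
  · rw [← hlab, Equiv.apply_symm_apply]

lemma iso_of_bijective (φ : G.V → H.V) (ψ : G.A → H.A) (hφ : Function.Bijective φ)
    (hψ : Function.Bijective ψ) (htl : ∀ a, H.tl (ψ a) = φ (G.tl a))
    (hhd : ∀ a, H.hd (ψ a) = φ (G.hd a)) (hroot : φ G.root = H.root)
    (hlab : ∀ v, H.lab (φ v) = G.lab v) : Iso G H :=
  ⟨.ofBijective φ hφ, .ofBijective ψ hψ, htl, hhd, hroot, hlab⟩

namespace Mor

variable (f : Mor G H)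

lemma reaches_map {u v : G.V} (h : G.Reaches u v) : H.Reaches (f.fV u) (f.fV v) := by
  induction h with
  | refl => exact .refl
  | tail _ hbc ih =>
    obtain ⟨b, rfl, rfl⟩ := hbc
    exact ih.tail ⟨f.fA b, f.tl_comm b, f.hd_comm b⟩

lemma isRooted_of_surjective [Finite H.A] (hreach : ∀ v, G.Reaches G.root v)
    (h0 : H.indeg H.root = 0) (hsurj : Function.Surjective f.fV) : f.IsRooted := by
  obtain ⟨w, hw⟩ := hsurj H.root
  exact eq_root_of_reaches_root h0 (hw ▸ f.reaches_map (hreach w))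

lemma lab_fV [Finite H.A] (hG : ∀ v, G.IsLeaf v → ∃ x, G.lab v = some x)
    (hH : ∀ v x, H.lab v = some x → H.IsLeaf v) (v : G.V) : H.lab (f.fV v) = G.lab v := by
  cases hv : G.lab v with
  | some x => exact f.lab_pres v x hv
  | none =>
    have hnotleaf : ¬ G.IsLeaf v := fun hleaf => by simpa [hv] using hG v hleaf
    obtain ⟨a, rfl⟩ := exists_tl_eq_of_not_isLeaf hnotleaf
    refine Option.eq_none_iff_forall_ne_some.mpr fun x hx => ?_
    exact tl_ne_of_isLeaf (hH _ x hx) (f.fA a) (f.tl_comm a)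

def HasUniqueArcLifting_s11 : Prop :=
  ∀ (a : H.A) (v : G.V), f.fV v = H.tl a → ∃! b : G.A, G.tl b = v ∧ f.fA b = a

lemma IsFolding.hasUniqueArcLifting_s11 {f : Mor G H} (hf : f.IsFolding) :
    f.HasUniqueArcLifting_s11 :=
  hf.2.2

end Mor

namespace Mor.HasUniqueArcLifting_s11

variable {f : Mor G H} (hf : f.HasUniqueArcLifting_s11)

noncomputable def liftArc (a : H.A) (v : G.V) (h : f.fV v = H.tl a) : G.A :=
  (hf a v h).choose

lemma tl_liftArc (a : H.A) (v : G.V) (h : f.fV v = H.tl a) : G.tl (hf.liftArc a v h) = v :=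
  (hf a v h).choose_spec.1.1

lemma fA_liftArc (a : H.A) (v : G.V) (h : f.fV v = H.tl a) : f.fA (hf.liftArc a v h) = a :=
  (hf a v h).choose_spec.1.2

lemma eq_liftArc {a : H.A} {v : G.V} (h : f.fV v = H.tl a) {b : G.A} (hb : G.tl b = v)
    (hba : f.fA b = a) : b = hf.liftArc a v h :=
  (hf a v h).choose_spec.2 b ⟨hb, hba⟩

noncomputable def liftPath (hr : f.IsRooted) : {u : H.V} → RPath H u → {w : G.V // f.fV w = u}
  | _, .nil => ⟨G.root, hr⟩
  | _, .cons p a h =>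
    ⟨G.hd (hf.liftArc a (liftPath hr p).1 ((liftPath hr p).2.trans h.symm)),
      by rw [← f.hd_comm, fA_liftArc]⟩

variable (hr : f.IsRooted)

noncomputable def liftV (x : H.Ustar.V) : G.V := (hf.liftPath hr x.2).1

noncomputable def liftA (x : H.Ustar.A) : G.A :=
  hf.liftArc x.2.2.1 (hf.liftV hr (H.Ustar.tl x)) ((hf.liftPath hr x.2.1).2.trans x.2.2.2.symm)

lemma fV_liftV (x : H.Ustar.V) : f.fV (hf.liftV hr x) = x.1 := (hf.liftPath hr x.2).2

lemma fA_liftA (x : H.Ustar.A) : f.fA (hf.liftA hr x) = x.2.2.1 := hf.fA_liftArc ..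

lemma tl_liftA (x : H.Ustar.A) : G.tl (hf.liftA hr x) = hf.liftV hr (H.Ustar.tl x) :=
  hf.tl_liftArc ..

lemma hd_liftA (x : H.Ustar.A) : G.hd (hf.liftA hr x) = hf.liftV hr (H.Ustar.hd x) := rfl

lemma liftV_root : hf.liftV hr H.Ustar.root = G.root := rfl

lemma liftV_injective [Finite G.A] (h0 : G.indeg G.root = 0)
    (h1 : ∀ v, v ≠ G.root → G.indeg v = 1) : Function.Injective (hf.liftV hr) := by
  rintro ⟨u, p⟩
  induction p with
  | nil =>
    rintro ⟨_, _ | ⟨q', a', h'⟩⟩ hxy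
    · rfl
    · exact absurd hxy.symm (hd_ne_of_indeg_eq_zero h0 (hf.liftA hr ⟨_, q', a', h'⟩))
  | cons q a h ih =>
    rintro ⟨_, _ | ⟨q', a', h'⟩⟩ hxy
    · exact absurd hxy (hd_ne_of_indeg_eq_zero h0 (hf.liftA hr ⟨_, q, a, h⟩))
    · -- the unique arc of `G` entering the common endpoint determines both last steps
      have hb : hf.liftA hr ⟨_, q, a, h⟩ = hf.liftA hr ⟨_, q', a', h'⟩ :=
        eq_of_indeg_eq_one (h1 _ (hd_ne_of_indeg_eq_zero h0 _)) hxy rfl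
      have ha : a = a' :=
        (hf.fA_liftA hr _).symm.trans ((congrArg f.fA hb).trans (hf.fA_liftA hr _))
      have htl : (⟨_, q⟩ : H.Ustar.V) = ⟨_, q'⟩ :=
        ih ((hf.tl_liftA hr _).symm.trans ((congrArg G.tl hb).trans (hf.tl_liftA hr _)))
      exact congrArg H.Ustar.hd
        (Ustar.arc_ext (x := ⟨_, q, a, h⟩) (y := ⟨_, q', a', h'⟩) htl ha)

lemma liftV_surjective (hreach : ∀ v, G.Reaches G.root v) :
    Function.Surjective (hf.liftV hr) := by
  intro w
  induction hreach w with
  | refl => exact ⟨H.Ustar.root, rfl⟩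
  | tail _ hvw ih =>
    obtain ⟨b, rfl, rfl⟩ := hvw
    obtain ⟨⟨u, p⟩, hx⟩ := ih
    have htl : H.tl (f.fA b) = u := by
      rw [f.tl_comm, ← hx]
      exact hf.fV_liftV hr _
    exact ⟨H.Ustar.hd ⟨u, p, f.fA b, htl⟩, (congrArg G.hd (hf.eq_liftArc _ hx.symm rfl)).symm⟩

lemma liftA_injective (hV : Function.Injective (hf.liftV hr)) :
    Function.Injective (hf.liftA hr) := fun x y hxy =>
  Ustar.arc_ext (hV (by simpa only [tl_liftA] using congrArg G.tl hxy))
    (by simpa only [fA_liftA] using congrArg f.fA hxy)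

lemma liftA_surjective (hV : Function.Surjective (hf.liftV hr)) :
    Function.Surjective (hf.liftA hr) := by
  intro b
  obtain ⟨⟨u, p⟩, hx⟩ := hV (G.tl b)
  have htl : H.tl (f.fA b) = u := by
    rw [f.tl_comm, ← hx]
    exact hf.fV_liftV hr _
  exact ⟨⟨u, p, f.fA b, htl⟩, (hf.eq_liftArc _ hx.symm rfl).symm⟩

end Mor.HasUniqueArcLifting_s11

theorem Mor.HasUniqueArcLifting_s11.iso_ustar {f : Mor G H} (hf : f.HasUniqueArcLifting_s11)
    (hr : f.IsRooted) [Finite G.A] (h0 : G.indeg G.root = 0) (h1 : ∀ v, v ≠ G.root → G.indeg v = 1)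
    (hreach : ∀ v, G.Reaches G.root v) (hlab : ∀ v, H.lab (f.fV v) = G.lab v) :
    Iso H.Ustar G := by
  have hV : Function.Bijective (hf.liftV hr) :=
    ⟨hf.liftV_injective hr h0 h1, hf.liftV_surjective hr hreach⟩
  refine iso_of_bijective _ _ hV ⟨hf.liftA_injective hr hV.1, hf.liftA_surjective hr hV.2⟩
    (hf.tl_liftA hr) (hf.hd_liftA hr) (hf.liftV_root hr) fun x => ?_
  rw [← hlab, fV_liftV]
  rfl

end Dgr

/-- If a pseudo MUL-tree `T'` on `X` admits a folding map
onto a phylogenetic network `N` on `X`, then `T'` is isomorphic to the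
path-tree `U*(N)`. -/
theorem folding_domain_unique (X : Type) (T' N : Dgr X) (hT' : T'.IsPMulTree)
    (hN : N.IsPhyloNetwork) (g : Dgr.Mor T' N) (hg : g.IsFolding) :
    Dgr.Iso T' N.Ustar := by
  obtain ⟨⟨-, hfinT, -, hrootT, hreach⟩, hindeg, hleafT, -⟩ := hT'
  obtain ⟨⟨⟨-, hfinN, -, hrootN, -⟩, -, -, hleafN, -⟩, -⟩ := hN
  have hr : g.IsRooted := g.isRooted_of_surjective hreach hrootN hg.1
  have hlab : ∀ v, N.lab (g.fV v) = T'.lab v :=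
    g.lab_fV (fun v hv => (hleafT v).2 hv) fun v x hx => (hleafN v).1 ⟨x, hx⟩
  exact (hg.hasUniqueArcLifting_s11.iso_ustar hr hrootT hindeg hreach hlab).symm
end
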